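/- Weight recovery (regularized form of Corollary 3, part 2): let h_1, …, h_t be pairwise distinct vectors in ℝ^d and let p_1, …, p_t > 0 satisfy Σ_k p_k = 1. For every index j ∈ {1, …, t}, as σ → 0⁺ the scalar quantity (4πσ)^{d/2} ∫_{ℝ^d} φ(θ) · conj(w̃_j(θ)) · e^{−σ‖θ‖²} dθ converges to p_j. -/
import Mathlib


open MeasureTheory Real Filter RealInnerProductSpace

/-- The empirical characteristic function `φ(θ) = ∑ₖ pₖ e^{i⟨θ,hₖ⟩}`. -/
noncomputable def empCharFun {d t : ℕ} (h : Fin t → EuclideanSpace ℝ (Fin d))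
    (p : Fin t → ℝ) (θ : EuclideanSpace ℝ (Fin d)) : ℂ :=
  ∑ k, (p k : ℂ) * Complex.exp (Complex.I * (⟪θ, h k⟫ : ℝ))

/-- The scalar spectral query `w̃_j(θ) = (1/(2π)^d) e^{i⟨θ,h_j⟩}`. -/
noncomputable def scalarQuery {d t : ℕ} (h : Fin t → EuclideanSpace ℝ (Fin d))
    (j : Fin t) (θ : EuclideanSpace ℝ (Fin d)) : ℂ :=
  ((1 : ℂ) / ((2 * Real.pi) ^ d : ℝ)) *
    Complex.exp (Complex.I * (⟪θ, h j⟫ : ℝ))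

/-- **Weight recovery (regularized form of Corollary 3, part 2).**
For pairwise distinct `h₁, …, h_t ∈ ℝ^d` with weights `pₖ > 0` summing to `1`,
and every index `j`, as `σ → 0⁺` the scalar quantity
`(4πσ)^{d/2} ∫ φ(θ) * conj (w̃_j θ) * e^{−σ‖θ‖²} dθ` converges to `p_j`. -/
theorem weight_recovery
    (d t : ℕ) (h : Fin t → EuclideanSpace ℝ (Fin d)) (hdist : Function.Injective h)
    (p : Fin t → ℝ) (hp : ∀ k, 0 < p k) (hsum : ∑ k, p k = 1) (j : Fin t) :
    Tendsto
      (fun σ : ℝ =>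
        (((4 * Real.pi * σ) ^ ((d : ℝ) / 2) : ℝ) : ℂ) *
          ∫ θ : EuclideanSpace ℝ (Fin d),
            empCharFun h p θ * (starRingEnd ℂ) (scalarQuery h j θ) *
              (Real.exp (-σ * ‖θ‖ ^ 2) : ℂ))
      (nhdsWithin 0 (Set.Ioi 0))
      (nhds (p j : ℂ)) := by
  have key : ∀ σ : ℝ, 0 < σ →
      (((4 * Real.pi * σ) ^ ((d : ℝ) / 2) : ℝ) : ℂ) *
          ∫ θ : EuclideanSpace ℝ (Fin d),
            empCharFun h p θ * (starRingEnd ℂ) (scalarQuery h j θ) *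
              (Real.exp (-σ * ‖θ‖ ^ 2) : ℂ)
      = ∑ k, (p k : ℂ) * (Real.exp (-‖h k - h j‖ ^ 2 / (4 * σ)) : ℂ) := by
    intro σ hσ
    have hb : 0 < ((σ : ℂ)).re := by simpa using hσ
    have hπσ : (0:ℝ) < Real.pi / σ := by positivity
    -- rewrite the integrand as a finite sum of Gaussians
    have hint : ∀ θ : EuclideanSpace ℝ (Fin d),
        empCharFun h p θ * (starRingEnd ℂ) (scalarQuery h j θ) *
            (Real.exp (-σ * ‖θ‖ ^ 2) : ℂ)
        = ∑ k, ((p k : ℂ) * ((1 : ℂ) / ((2 * Real.pi) ^ d : ℝ))) *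
            Complex.exp (-(σ:ℂ) * (‖θ‖:ℂ) ^ 2
              + Complex.I * ((⟪h k - h j, θ⟫ : ℝ) : ℂ)) := by
      intro θ
      unfold empCharFun scalarQuery
      rw [map_mul, Finset.sum_mul, Finset.sum_mul]
      refine Finset.sum_congr rfl fun k _ => ?_
      have hconj2 : (starRingEnd ℂ) ((1 : ℂ) / ((2 * Real.pi) ^ d : ℝ))
          = (1 : ℂ) / ((2 * Real.pi) ^ d : ℝ) := by
        rw [map_div₀, map_one, Complex.conj_ofReal]
      have hconj : (starRingEnd ℂ) (Complex.exp (Complex.I * ((⟪θ, h j⟫ : ℝ) : ℂ)))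
          = Complex.exp (-(Complex.I * ((⟪θ, h j⟫ : ℝ) : ℂ))) := by
        rw [← Complex.exp_conj, map_mul, Complex.conj_I, Complex.conj_ofReal, neg_mul]
      rw [hconj2, hconj, Complex.ofReal_exp]
      have key2 : ∀ (a b c2 C P : ℂ),
          P * Complex.exp a * (C * Complex.exp b) * Complex.exp c2
            = P * C * Complex.exp (a + b + c2) := by
        intro a b c2 C P
        rw [Complex.exp_add, Complex.exp_add]; ring
      rw [key2]
      congr 1
      have hi : (⟪h k - h j, θ⟫ : ℝ) = ⟪θ, h k⟫ - ⟪θ, h j⟫ := by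
        rw [inner_sub_left, real_inner_comm (h k) θ, real_inner_comm (h j) θ]
      rw [hi]
      push_cast
      ring
    rw [MeasureTheory.integral_congr_ae (Filter.Eventually.of_forall hint)]
    rw [MeasureTheory.integral_finset_sum _ (fun k _ =>
      (GaussianFourier.integrable_cexp_neg_mul_sq_norm_add hb Complex.I (h k - h j)).const_mul _)]
    have hval : ∀ k : Fin t,
        ∫ θ : EuclideanSpace ℝ (Fin d),
          Complex.exp (-(σ:ℂ) * (‖θ‖:ℂ) ^ 2 + Complex.I * ((⟪h k - h j, θ⟫ : ℝ) : ℂ))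
        = ((Real.pi / σ : ℂ)) ^ ((d : ℂ) / 2) *
            Complex.exp (Complex.I ^ 2 * (‖h k - h j‖ : ℂ) ^ 2 / (4 * (σ:ℂ))) := by
      intro k
      have := GaussianFourier.integral_cexp_neg_mul_sq_norm_add (V := EuclideanSpace ℝ (Fin d))
        hb Complex.I (h k - h j)
      simpa using this
    simp_rw [MeasureTheory.integral_const_mul, hval, Finset.mul_sum]
    refine Finset.sum_congr rfl fun k _ => ?_
    have hconst : (((4 * Real.pi * σ) ^ ((d : ℝ) / 2) : ℝ) : ℂ) *
        ((1 : ℂ) / ((2 * Real.pi) ^ d : ℝ)) *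
        ((Real.pi / σ : ℂ)) ^ ((d : ℂ) / 2) = 1 := by
      have h1 : ((Real.pi : ℂ) / σ) = ((Real.pi / σ : ℝ) : ℂ) := by push_cast; ring
      have h2 : ((d : ℂ) / 2) = (((d : ℝ) / 2 : ℝ) : ℂ) := by push_cast; ring
      rw [h1, h2, ← Complex.ofReal_cpow hπσ.le]
      have h3 : ((4 * Real.pi * σ) ^ ((d : ℝ) / 2) : ℝ) *
          ((Real.pi / σ) ^ ((d : ℝ) / 2) : ℝ) = ((2 * Real.pi) ^ d : ℝ) := by
        rw [← Real.mul_rpow (by positivity) (by positivity)]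
        have h4 : 4 * Real.pi * σ * (Real.pi / σ) = (2 * Real.pi) ^ 2 := by
          field_simp; ring
        rw [h4, ← Real.rpow_natCast (2 * Real.pi) 2,
          ← Real.rpow_mul (by positivity)]
        rw [show (((2:ℕ)):ℝ) * ((d : ℝ) / 2) = (d : ℝ) by push_cast; ring,
          Real.rpow_natCast]
      have h5 : ((2 * Real.pi) ^ d : ℝ) ≠ 0 := by positivity
      have h6 : ((((4 * Real.pi * σ) ^ ((d : ℝ) / 2) : ℝ)) : ℂ) *
          ((1 : ℂ) / ((2 * Real.pi) ^ d : ℝ)) *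
          (((Real.pi / σ) ^ ((d : ℝ) / 2) : ℝ) : ℂ)
          = ((((4 * Real.pi * σ) ^ ((d : ℝ) / 2) *
              (Real.pi / σ) ^ ((d : ℝ) / 2) : ℝ)) : ℂ) /
            (((2 * Real.pi) ^ d : ℝ) : ℂ) := by
        push_cast
        ring
      rw [h6, h3, div_self (Complex.ofReal_ne_zero.mpr h5)]
    have hexp : Complex.exp (Complex.I ^ 2 * (‖h k - h j‖ : ℂ) ^ 2 / (4 * (σ:ℂ)))
        = (Real.exp (-‖h k - h j‖ ^ 2 / (4 * σ)) : ℂ) := by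
      rw [Complex.ofReal_exp]
      congr 1
      rw [Complex.I_sq]
      push_cast
      ring
    rw [hexp]
    calc (((4 * Real.pi * σ) ^ ((d : ℝ) / 2) : ℝ) : ℂ) *
          ((p k : ℂ) * ((1 : ℂ) / ((2 * Real.pi) ^ d : ℝ)) *
            (((Real.pi / σ : ℂ)) ^ ((d : ℂ) / 2) *
              (Real.exp (-‖h k - h j‖ ^ 2 / (4 * σ)) : ℂ)))
        = ((((4 * Real.pi * σ) ^ ((d : ℝ) / 2) : ℝ) : ℂ) *
            ((1 : ℂ) / ((2 * Real.pi) ^ d : ℝ)) *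
            ((Real.pi / σ : ℂ)) ^ ((d : ℂ) / 2)) *
            ((p k : ℂ) * (Real.exp (-‖h k - h j‖ ^ 2 / (4 * σ)) : ℂ)) := by ring
      _ = (p k : ℂ) * (Real.exp (-‖h k - h j‖ ^ 2 / (4 * σ)) : ℂ) := by
            rw [hconst, one_mul]
  -- limit of the simplified expression
  have lim : Tendsto
      (fun σ : ℝ => ∑ k, (p k : ℂ) * (Real.exp (-‖h k - h j‖ ^ 2 / (4 * σ)) : ℂ))
      (nhdsWithin 0 (Set.Ioi 0)) (nhds (p j : ℂ)) := by
    have hpj : (p j : ℂ) = ∑ k, (if k = j then (p k : ℂ) else 0) := by simp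
    rw [hpj]
    refine tendsto_finset_sum _ fun k _ => ?_
    by_cases hk : k = j
    · subst hk
      simp only [sub_self, norm_zero, if_pos rfl]
      have : ∀ σ : ℝ, (p k : ℂ) * (Real.exp (-(0:ℝ) ^ 2 / (4 * σ)) : ℂ) = (p k : ℂ) := by
        intro σ; norm_num
      simpa [this] using tendsto_const_nhds (x := (p k : ℂ))
        (f := nhdsWithin (0:ℝ) (Set.Ioi 0))
    · simp only [if_neg hk]
      have hc : (0:ℝ) < ‖h k - h j‖ ^ 2 := by
        have hne : h k - h j ≠ 0 := sub_ne_zero.mpr (fun e => hk (hdist e))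
        exact pow_pos (norm_pos_iff.mpr hne) 2
      have h1 : Tendsto (fun σ : ℝ => ‖h k - h j‖ ^ 2 / 4 * σ⁻¹)
          (nhdsWithin 0 (Set.Ioi 0)) atTop :=
        Tendsto.const_mul_atTop (by positivity) tendsto_inv_nhdsGT_zero
      have h2 : Tendsto (fun σ : ℝ => -‖h k - h j‖ ^ 2 / (4 * σ))
          (nhdsWithin 0 (Set.Ioi 0)) atBot := by
        have := (tendsto_neg_atTop_atBot).comp h1
        refine this.congr fun σ => ?_
        simp only [Function.comp_apply]
        ring
      have h3 : Tendsto (fun σ : ℝ => Real.exp (-‖h k - h j‖ ^ 2 / (4 * σ)))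
          (nhdsWithin 0 (Set.Ioi 0)) (nhds 0) := Real.tendsto_exp_atBot.comp h2
      have h4 : Tendsto (fun σ : ℝ => (Real.exp (-‖h k - h j‖ ^ 2 / (4 * σ)) : ℂ))
          (nhdsWithin 0 (Set.Ioi 0)) (nhds ((0:ℝ):ℂ)) :=
        (Complex.continuous_ofReal.tendsto _).comp h3
      have := h4.const_mul (p k : ℂ)
      simpa using this
  refine lim.congr' ?_
  filter_upwards [self_mem_nhdsWithin] with σ hσ
  exact (key σ hσ).symm
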